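/- arXiv:2409.05561 — 2 statements merged into one kernel-verified Lean document; each statement's English description precedes it below -/
import Mathlib

section
/- Let n ≥ 1, C an additive category, Σ : C → C an additive endofunctor, and Θ a class of (n+2)-Σ-sequences. If Θ satisfies axiom (RN1)(c) and the octahedral axiom (RN4*), then Θ satisfies the morphism axiom (RN3): given two members of Θ with first morphisms a₀ : A₀ → A₁ and b₀ : B₀ → B₁ and morphisms f₀ : A₀ → B₀, f₁ : A₁ → B₁ with f₁a₀ = b₀f₀, there exist morphisms f₂,…,f_{n+1} such that (f₀,f₁,…,f_{n+1}) is a morphism of (n+2)-Σ-sequences. -/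
open CategoryTheory CategoryTheory.Limits ZeroObject

attribute [local instance] CategoryTheory.Limits.hasBinaryBiproducts_of_finite_biproducts

noncomputable section

namespace NAng

variable {C : Type*} [Category C]

/-- An `(n+2)`-`Σ`-sequence `A₀ → A₁ → ⋯ → A_{n+1} → ΣA₀`.  Objects are indexed by `ℕ`;
only the indices `0, …, n+1` (and the maps `0, …, n` together with `connect`) are relevant. -/
structure Seq (n : ℕ) (C : Type*) [Category C] (F : C ⥤ C) where
  obj : ℕ → C
  map : ∀ i, obj i ⟶ obj (i + 1)
  connect : obj (n + 1) ⟶ F.obj (obj 0)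

namespace Seq

variable {n : ℕ} {F : C ⥤ C}

/-- A morphism of `(n+2)`-`Σ`-sequences: a family of morphisms making every square
(including the last one, involving `F`) commute. -/
structure Hom (S T : Seq n C F) where
  f : ∀ i, S.obj i ⟶ T.obj i
  comm : ∀ i ≤ n, S.map i ≫ f (i + 1) = f i ≫ T.map i
  comm_connect : S.connect ≫ F.map (f 0) = f (n + 1) ≫ T.connect

/-- A morphism of sequences is an isomorphism if all its (relevant) components are. -/
def Hom.IsIsoAll {S T : Seq n C F} (φ : Hom S T) : Prop :=
  ∀ i ≤ n + 1, IsIso (φ.f i)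

section Additive

variable [Preadditive C] [HasFiniteBiproducts C]

/-- The direct sum of two `(n+2)`-`Σ`-sequences. -/
def dsum (S T : Seq n C F) : Seq n C F where
  obj i := S.obj i ⊞ T.obj i
  map i := biprod.map (S.map i) (T.map i)
  connect := biprod.map S.connect T.connect ≫ biprod.desc (F.map biprod.inl) (F.map biprod.inr)

/-- The left rotation of an `(n+2)`-`Σ`-sequence:
`A₁ → ⋯ → A_{n+1} → ΣA₀ --(-1)ⁿ Σa₀--> ΣA₁`. -/
def rot (S : Seq n C F) : Seq n C F where
  obj i := if i = n + 1 then F.obj (S.obj 0) else S.obj (i + 1)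
  map i := by
    by_cases h1 : i = n
    · subst h1
      exact eqToHom (if_neg (by omega)) ≫ S.connect ≫ eqToHom (if_pos rfl).symm
    · by_cases h2 : i = n + 1
      · exact 0
      · exact eqToHom (if_neg h2) ≫ S.map (i + 1) ≫ eqToHom (if_neg (by omega)).symm
  connect :=
    eqToHom (if_pos rfl) ≫ ((-1 : ℤ) ^ n • F.map (S.map 0)) ≫
      eqToHom (congrArg F.obj (if_neg (by omega : ¬(0 = n + 1)))).symm

/-- The trivial sequence `A --1--> A → 0 → ⋯ → 0 → ΣA`. -/
def trivA (n : ℕ) (F : C ⥤ C) (A : C) : Seq n C F where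
  obj i := match i with
    | 0 => A
    | 1 => A
    | _ + 2 => 0
  map i := match i with
    | 0 => 𝟙 A
    | _ + 1 => 0
  connect := 0

/-- The trivial sequence `0 → A --1--> A → 0 → ⋯ → 0`. -/
def trivB (n : ℕ) (F : C ⥤ C) (A : C) : Seq n C F where
  obj i := match i with
    | 0 => 0
    | 1 => A
    | 2 => A
    | _ + 3 => 0
  map i := match i with
    | 0 => 0
    | 1 => 𝟙 A
    | _ + 2 => 0
  connect := 0

end Additive

end Seq

/-- Auxiliary: a function `ℕ → C` with prescribed values at `0` and `1`. -/
def mk2 (X₀ X₁ : C) (T : ℕ → C) : ℕ → C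
  | 0 => X₀
  | 1 => X₁
  | i + 2 => T i

/-- Auxiliary: a function `ℕ → C` with prescribed value at `0`. -/
def mk1 (X₀ : C) (T : ℕ → C) : ℕ → C
  | 0 => X₀
  | i + 1 => T i

section Cone

variable {n : ℕ} [Preadditive C] [HasFiniteBiproducts C] {F : C ⥤ C}

/-- The mapping cone of a family `f i : S.obj i ⟶ T.obj i`:
`A₁⊕B₀ → A₂⊕B₁ → ⋯ → A_{n+1}⊕Bₙ → ΣA₀⊕B_{n+1} → Σ(A₁⊕B₀)`,
with maps `[[-aᵢ, 0], [fᵢ, bᵢ₋₁]]`. -/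
def cone (S T : Seq n C F) (f : ∀ i, S.obj i ⟶ T.obj i) : Seq n C F where
  obj k := if k = n + 1 then F.obj (S.obj 0) ⊞ T.obj (n + 1) else S.obj (k + 1) ⊞ T.obj k
  map k := by
    by_cases h1 : k = n
    · subst h1
      exact eqToHom (if_neg (by omega)) ≫
        biprod.desc (biprod.lift (-S.connect) (f (k + 1))) (biprod.lift 0 (T.map k)) ≫
        eqToHom (if_pos rfl).symm
    · by_cases h2 : k = n + 1
      · exact 0
      · exact eqToHom (if_neg h2) ≫
          biprod.desc (biprod.lift (-(S.map (k + 1))) (f (k + 1))) (biprod.lift 0 (T.map k)) ≫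
          eqToHom (if_neg (by omega : ¬(k + 1 = n + 1))).symm
  connect :=
    eqToHom (if_pos rfl) ≫
      biprod.desc (biprod.lift (-(F.map (S.map 0))) (F.map (f 0))) (biprod.lift 0 T.connect) ≫
      biprod.desc (F.map biprod.inl) (F.map biprod.inr) ≫
      eqToHom (congrArg F.obj (if_neg (by omega : ¬(0 = n + 1)))).symm

/-- A morphism between "zero padded" objects, which is the given morphism when both
propositions hold and zero otherwise. -/
def padHom (P Q : Prop) [Decidable P] [Decidable Q] {X Y : C} (φ : X ⟶ Y) :
    (if P then X else 0) ⟶ (if Q then Y else 0) :=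
  if hP : P then
    (if hQ : Q then eqToHom (if_pos hP) ≫ φ ≫ eqToHom (if_pos hQ).symm else 0)
  else 0

end Cone

section Oct

variable {n : ℕ} [Preadditive C] [HasFiniteBiproducts C] {F : C ⥤ C}

/-- The "octahedron" `(n+2)`-`Σ`-sequence
`A₂ → A₃⊕B₂ → A₄⊕B₃⊕C₂ → ⋯ → A_{n+1}⊕Bₙ⊕C_{n-1} → B_{n+1}⊕Cₙ → C_{n+1} → ΣA₂`
of axiom (N4), presented with all three summands at every spot, padding the missing
ones by the zero object. -/
def octo (A₀ A₁ B₁ : C) (TA TB TC : ℕ → C)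
    (aa : ∀ i, mk2 A₀ A₁ TA i ⟶ mk2 A₀ A₁ TA (i + 1))
    (bb : ∀ i, mk2 A₀ B₁ TB i ⟶ mk2 A₀ B₁ TB (i + 1))
    (cc : ∀ i, mk2 A₁ B₁ TC i ⟶ mk2 A₁ B₁ TC (i + 1))
    (cn : mk2 A₁ B₁ TC (n + 1) ⟶ F.obj A₁)
    (f : ∀ i, mk2 A₀ A₁ TA i ⟶ mk2 A₀ B₁ TB i)
    (g : ∀ i, mk2 A₀ B₁ TB i ⟶ mk2 A₁ B₁ TC i)
    (h : ∀ i, mk2 A₀ A₁ TA (i + 1) ⟶ mk2 A₁ B₁ TC i) : Seq n C F where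
  obj k :=
    (if k < n then mk2 A₀ A₁ TA (k + 2) else 0) ⊞
      ((if 1 ≤ k ∧ k ≤ n then mk2 A₀ B₁ TB (k + 1) else 0) ⊞
        (if 2 ≤ k ∧ k ≤ n + 1 then mk2 A₁ B₁ TC k else 0))
  map k :=
    biprod.desc
      (biprod.lift (padHom (k < n) (k + 1 < n) ((if k = 0 then (1 : ℤ) else -1) • aa (k + 2)))
        (biprod.lift
          (padHom (k < n) (1 ≤ k + 1 ∧ k + 1 ≤ n)
            ((if k = 0 then (1 : ℤ) else (-1) ^ (k + 1)) • f (k + 2)))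
          (padHom (k < n) (2 ≤ k + 1 ∧ k + 1 ≤ n + 1) (h (k + 1)))))
      (biprod.desc
        (biprod.lift 0
          (biprod.lift (padHom (1 ≤ k ∧ k ≤ n) (1 ≤ k + 1 ∧ k + 1 ≤ n) (-(bb (k + 1))))
            (padHom (1 ≤ k ∧ k ≤ n) (2 ≤ k + 1 ∧ k + 1 ≤ n + 1) (g (k + 1)))))
        (biprod.lift 0
          (biprod.lift 0
            (padHom (2 ≤ k ∧ k ≤ n + 1) (2 ≤ k + 1 ∧ k + 1 ≤ n + 1) (cc k)))))
  connect := by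
    refine biprod.desc 0 (biprod.desc 0 ?_)
    by_cases hq : 2 ≤ n + 1 ∧ n + 1 ≤ n + 1
    · by_cases hn : 0 < n
      · exact eqToHom (if_pos hq) ≫ cn ≫ F.map (aa 1) ≫
          F.map (eqToHom (if_pos hn).symm ≫ biprod.inl)
      · exact 0
    · exact 0

/-- The `(n+2)`-`Σ`-sequence
`A₁ --[-a₁;f₁]--> A₂⊕B₁ → ⋯ → A_{n+1}⊕Bₙ --[f_{n+1}, bₙ]--> B_{n+1} --Σa₀∘b_{n+1}--> ΣA₁`
appearing in axiom (RN4-2). -/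
def seq42 (A₀ A₁ B₁ : C) (TA TB : ℕ → C)
    (aa : ∀ i, mk2 A₀ A₁ TA i ⟶ mk2 A₀ A₁ TA (i + 1))
    (bb : ∀ i, mk2 A₀ B₁ TB i ⟶ mk2 A₀ B₁ TB (i + 1))
    (bn : mk2 A₀ B₁ TB (n + 1) ⟶ F.obj A₀)
    (f : ∀ i, mk2 A₀ A₁ TA i ⟶ mk2 A₀ B₁ TB i) : Seq n C F where
  obj k :=
    if k = 0 then A₁
    else if k = n + 1 then mk2 A₀ B₁ TB (n + 1)
    else mk2 A₀ A₁ TA (k + 1) ⊞ mk2 A₀ B₁ TB k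
  map k := by
    by_cases h0 : k = 0
    · subst h0
      by_cases hn : n = 0
      · exact 0
      · exact eqToHom (if_pos rfl) ≫ biprod.lift (-(aa 1)) (f 1) ≫
          eqToHom ((if_neg (by omega : ¬(1 = 0))).trans
            (if_neg (by omega : ¬(1 = n + 1)))).symm
    · by_cases h2 : k = n + 1
      · exact 0
      · by_cases h1 : k = n
        · subst h1
          exact eqToHom ((if_neg h0).trans (if_neg h2)) ≫
            biprod.desc (f (k + 1)) (bb k) ≫
            eqToHom ((if_neg (by omega : ¬(k + 1 = 0))).trans (if_pos rfl)).symm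
        · exact eqToHom ((if_neg h0).trans (if_neg h2)) ≫
            biprod.desc (biprod.lift (-(aa (k + 1))) (f (k + 1))) (biprod.lift 0 (bb k)) ≫
            eqToHom ((if_neg (by omega : ¬(k + 1 = 0))).trans
              (if_neg (by omega : ¬(k + 1 = n + 1)))).symm
  connect :=
    eqToHom ((if_neg (by omega : ¬(n + 1 = 0))).trans (if_pos rfl)) ≫
      bn ≫ F.map (aa 0) ≫ eqToHom (congrArg F.obj (if_pos rfl)).symm

end Oct
section Axioms

variable {n : ℕ} [Preadditive C] [HasFiniteBiproducts C] {F : C ⥤ C}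
variable (Θ : Set (Seq n C F))

/-- (N1)(a) / (RN1)(a), first part: the class is closed under isomorphisms of
`(n+2)`-`Σ`-sequences. -/
def ClosedIso : Prop :=
  ∀ (S T : Seq n C F) (φ : Seq.Hom S T), φ.IsIsoAll → S ∈ Θ → T ∈ Θ

/-- (N1)(a) / (RN1)(a), second part: the class is closed under direct sums. -/
def ClosedSums : Prop :=
  ∀ S T : Seq n C F, S ∈ Θ → T ∈ Θ → S.dsum T ∈ Θ

/-- (N1)(a) / (RN1)(a), third part: the class is closed under direct summands. -/
def ClosedSummands : Prop :=
  ∀ S T : Seq n C F, S.dsum T ∈ Θ → S ∈ Θ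

/-- (N1)(b): for every object `A` the trivial sequence `A --1--> A → 0 → ⋯ → 0 → ΣA`
belongs to the class. -/
def TrivialIn : Prop := ∀ A : C, Seq.trivA n F A ∈ Θ

/-- (RN1)(b*): for every object `A` the trivial sequence `0 → A --1--> A → 0 → ⋯ → 0`
belongs to the class. -/
def TrivialIn' : Prop := ∀ A : C, Seq.trivB n F A ∈ Θ

/-- (N1)(c) / (RN1)(c): every morphism occurs as the first morphism of some member of
the class. -/
def ExtendFirst : Prop :=
  ∀ ⦃A₀ A₁ : C⦄ (a₀ : A₀ ⟶ A₁),
    ∃ (T : ℕ → C) (m : ∀ i, mk2 A₀ A₁ T i ⟶ mk2 A₀ A₁ T (i + 1))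
      (cn : mk2 A₀ A₁ T (n + 1) ⟶ F.obj A₀),
      m 0 = a₀ ∧ Seq.mk (mk2 A₀ A₁ T) m cn ∈ Θ

/-- (RN2): the left rotation of any member of the class belongs to the class. -/
def RotIn : Prop := ∀ S : Seq n C F, S ∈ Θ → S.rot ∈ Θ

/-- (N2): a sequence belongs to the class if and only if its left rotation does. -/
def RotIff : Prop := ∀ S : Seq n C F, S ∈ Θ ↔ S.rot ∈ Θ

/-- (N3) / (RN3), the morphism axiom: a commutative square on the first two morphisms of
two members of the class extends to a morphism of `(n+2)`-`Σ`-sequences. -/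
def MorphismAxiom : Prop :=
  ∀ (S T : Seq n C F), S ∈ Θ → T ∈ Θ →
    ∀ (f₀ : S.obj 0 ⟶ T.obj 0) (f₁ : S.obj 1 ⟶ T.obj 1),
      S.map 0 ≫ f₁ = f₀ ≫ T.map 0 →
      ∃ φ : Seq.Hom S T, φ.f 0 = f₀ ∧ φ.f 1 = f₁

/-- (RN4*) / (N4*): the strengthened octahedral axiom. -/
def OctAxiomStar : Prop :=
  ∀ ⦃A₀ A₁ B₁ : C⦄ (TA TB TC : ℕ → C)
    (aa : ∀ i, mk2 A₀ A₁ TA i ⟶ mk2 A₀ A₁ TA (i + 1))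
    (an : mk2 A₀ A₁ TA (n + 1) ⟶ F.obj A₀)
    (bb : ∀ i, mk2 A₀ B₁ TB i ⟶ mk2 A₀ B₁ TB (i + 1))
    (bn : mk2 A₀ B₁ TB (n + 1) ⟶ F.obj A₀)
    (cc : ∀ i, mk2 A₁ B₁ TC i ⟶ mk2 A₁ B₁ TC (i + 1))
    (cn : mk2 A₁ B₁ TC (n + 1) ⟶ F.obj A₁)
    (f₁ : A₁ ⟶ B₁),
    Seq.mk (mk2 A₀ A₁ TA) aa an ∈ Θ →
    Seq.mk (mk2 A₀ B₁ TB) bb bn ∈ Θ →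
    Seq.mk (mk2 A₁ B₁ TC) cc cn ∈ Θ →
    bb 0 = aa 0 ≫ f₁ →
    cc 0 = f₁ →
    ∃ (f : ∀ i, mk2 A₀ A₁ TA i ⟶ mk2 A₀ B₁ TB i)
      (g : ∀ i, mk2 A₀ B₁ TB i ⟶ mk2 A₁ B₁ TC i)
      (h : ∀ i, mk2 A₀ A₁ TA (i + 1) ⟶ mk2 A₁ B₁ TC i),
      f 0 = 𝟙 A₀ ∧ f 1 = f₁ ∧ g 0 = aa 0 ∧ g 1 = 𝟙 B₁ ∧
      (∀ i ≤ n, aa i ≫ f (i + 1) = f i ≫ bb i) ∧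
      an ≫ F.map (f 0) = f (n + 1) ≫ bn ∧
      (∀ i ≤ n, bb i ≫ g (i + 1) = g i ≫ cc i) ∧
      bn ≫ F.map (g 0) = g (n + 1) ≫ cn ∧
      octo A₀ A₁ B₁ TA TB TC aa bb cc cn f g h ∈ Θ

/-- (N4): the higher octahedral axiom. -/
def OctAxiom : Prop :=
  ∀ ⦃A₀ A₁ B₁ : C⦄ (TA TB TC : ℕ → C)
    (aa : ∀ i, mk2 A₀ A₁ TA i ⟶ mk2 A₀ A₁ TA (i + 1))
    (an : mk2 A₀ A₁ TA (n + 1) ⟶ F.obj A₀)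
    (bb : ∀ i, mk2 A₀ B₁ TB i ⟶ mk2 A₀ B₁ TB (i + 1))
    (bn : mk2 A₀ B₁ TB (n + 1) ⟶ F.obj A₀)
    (cc : ∀ i, mk2 A₁ B₁ TC i ⟶ mk2 A₁ B₁ TC (i + 1))
    (cn : mk2 A₁ B₁ TC (n + 1) ⟶ F.obj A₁)
    (f₁ : A₁ ⟶ B₁),
    Seq.mk (mk2 A₀ A₁ TA) aa an ∈ Θ →
    Seq.mk (mk2 A₀ B₁ TB) bb bn ∈ Θ →
    Seq.mk (mk2 A₁ B₁ TC) cc cn ∈ Θ →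
    bb 0 = aa 0 ≫ f₁ →
    cc 0 = f₁ →
    ∃ (f : ∀ i, mk2 A₀ A₁ TA i ⟶ mk2 A₀ B₁ TB i)
      (g : ∀ i, mk2 A₀ B₁ TB i ⟶ mk2 A₁ B₁ TC i)
      (h : ∀ i, mk2 A₀ A₁ TA (i + 1) ⟶ mk2 A₁ B₁ TC i),
      f 0 = 𝟙 A₀ ∧ f 1 = f₁ ∧
      (∀ i ≤ n, aa i ≫ f (i + 1) = f i ≫ bb i) ∧
      an ≫ F.map (f 0) = f (n + 1) ≫ bn ∧
      bn ≫ F.map (aa 0) = g (n + 1) ≫ cn ∧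
      octo A₀ A₁ B₁ TA TB TC aa bb cc cn f g h ∈ Θ

/-- (RN4-1), the mapping cone axiom. -/
def ConeAxiom : Prop :=
  ∀ (S T : Seq n C F), S ∈ Θ → T ∈ Θ →
    ∀ (f₀ : S.obj 0 ⟶ T.obj 0) (f₁ : S.obj 1 ⟶ T.obj 1),
      S.map 0 ≫ f₁ = f₀ ≫ T.map 0 →
      ∃ φ : Seq.Hom S T, φ.f 0 = f₀ ∧ φ.f 1 = f₁ ∧ cone S T φ.f ∈ Θ

/-- (RN4-2). -/
def ConeAxiom2 : Prop :=
  ∀ ⦃A₀ A₁ B₁ : C⦄ (TA TB : ℕ → C)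
    (aa : ∀ i, mk2 A₀ A₁ TA i ⟶ mk2 A₀ A₁ TA (i + 1))
    (an : mk2 A₀ A₁ TA (n + 1) ⟶ F.obj A₀)
    (bb : ∀ i, mk2 A₀ B₁ TB i ⟶ mk2 A₀ B₁ TB (i + 1))
    (bn : mk2 A₀ B₁ TB (n + 1) ⟶ F.obj A₀)
    (f₁ : A₁ ⟶ B₁),
    Seq.mk (mk2 A₀ A₁ TA) aa an ∈ Θ →
    Seq.mk (mk2 A₀ B₁ TB) bb bn ∈ Θ →
    bb 0 = aa 0 ≫ f₁ →
    ∃ f : ∀ i, mk2 A₀ A₁ TA i ⟶ mk2 A₀ B₁ TB i,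
      f 0 = 𝟙 A₀ ∧ f 1 = f₁ ∧
      (∀ i ≤ n, aa i ≫ f (i + 1) = f i ≫ bb i) ∧
      an ≫ F.map (f 0) = f (n + 1) ≫ bn ∧
      seq42 A₀ A₁ B₁ TA TB aa bb bn f ∈ Θ

end Axioms

/-
The square `(f₀, f₁)` factors through the diagonal `a₀ ≫ f₁ = f₀ ≫ b₀` as `(𝟙, f₁)` followed by
`(f₀, 𝟙)`. Extending the diagonal to a member `U` of `Θ` by (RN1)(c), each factor extends to a
morphism of sequences: `S → U` is the first pair of rows of the octahedron on `a₀` and `f₁`, and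
`U → T` the second pair of rows of the octahedron on `f₀` and `b₀`. The composite extends `(f₀, f₁)`.
-/

section MorphismAxiom

variable {n : ℕ} {F : C ⥤ C}

-- (RN1)(c) and (RN4*) only speak about sequences whose objects are literally `mk2 _ _ _`.
lemma exists_eq_mk2 {D : Type*} (X : ℕ → D) : ∃ X₀ X₁ T, X = mk2 X₀ X₁ T :=
  ⟨X 0, X 1, fun j => X (j + 2), funext fun | 0 => rfl | 1 => rfl | _ + 2 => rfl⟩

@[simps]
def Seq.Hom.comp {S T U : Seq n C F} (φ : S.Hom T) (ψ : T.Hom U) : S.Hom U where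
  f i := φ.f i ≫ ψ.f i
  comm i hi := by rw [reassoc_of% φ.comm i hi, ψ.comm i hi, Category.assoc]
  comm_connect := by
    rw [F.map_comp, reassoc_of% φ.comm_connect, ψ.comm_connect, Category.assoc]

variable [Preadditive C] [HasFiniteBiproducts C] {Θ : Set (Seq n C F)}

lemma OctAxiomStar.exists_hom_to_comp (h4 : OctAxiomStar Θ) (h1c : ExtendFirst Θ)
    {A₀ A₁ B₁ : C} {TA TB : ℕ → C}
    {aa : ∀ i, mk2 A₀ A₁ TA i ⟶ mk2 A₀ A₁ TA (i + 1)} {an : mk2 A₀ A₁ TA (n + 1) ⟶ F.obj A₀}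
    {bb : ∀ i, mk2 A₀ B₁ TB i ⟶ mk2 A₀ B₁ TB (i + 1)} {bn : mk2 A₀ B₁ TB (n + 1) ⟶ F.obj A₀}
    (hA : Seq.mk (mk2 A₀ A₁ TA) aa an ∈ Θ) (hB : Seq.mk (mk2 A₀ B₁ TB) bb bn ∈ Θ)
    (f₁ : A₁ ⟶ B₁) (hb : bb 0 = aa 0 ≫ f₁) :
    ∃ φ : Seq.Hom ⟨mk2 A₀ A₁ TA, aa, an⟩ ⟨mk2 A₀ B₁ TB, bb, bn⟩, φ.f 0 = 𝟙 A₀ ∧ φ.f 1 = f₁ := by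
  obtain ⟨TC, cc, cn, hc, hC⟩ := h1c f₁
  obtain ⟨f, -, -, hf₀, hf₁, -, -, hf, hf_connect, -⟩ :=
    h4 TA TB TC aa an bb bn cc cn f₁ hA hB hC hb hc
  exact ⟨⟨f, hf, hf_connect⟩, hf₀, hf₁⟩

lemma OctAxiomStar.exists_hom_from_comp (h4 : OctAxiomStar Θ)
    {A₀ A₁ B₁ : C} {TA TB TC : ℕ → C}
    {aa : ∀ i, mk2 A₀ A₁ TA i ⟶ mk2 A₀ A₁ TA (i + 1)} {an : mk2 A₀ A₁ TA (n + 1) ⟶ F.obj A₀}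
    {bb : ∀ i, mk2 A₀ B₁ TB i ⟶ mk2 A₀ B₁ TB (i + 1)} {bn : mk2 A₀ B₁ TB (n + 1) ⟶ F.obj A₀}
    {cc : ∀ i, mk2 A₁ B₁ TC i ⟶ mk2 A₁ B₁ TC (i + 1)} {cn : mk2 A₁ B₁ TC (n + 1) ⟶ F.obj A₁}
    (hA : Seq.mk (mk2 A₀ A₁ TA) aa an ∈ Θ) (hB : Seq.mk (mk2 A₀ B₁ TB) bb bn ∈ Θ)
    (hC : Seq.mk (mk2 A₁ B₁ TC) cc cn ∈ Θ) (hb : bb 0 = aa 0 ≫ cc 0) :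
    ∃ ψ : Seq.Hom ⟨mk2 A₀ B₁ TB, bb, bn⟩ ⟨mk2 A₁ B₁ TC, cc, cn⟩,
      ψ.f 0 = aa 0 ∧ ψ.f 1 = 𝟙 B₁ := by
  obtain ⟨-, g, -, -, -, hg₀, hg₁, -, -, hg, hg_connect, -⟩ :=
    h4 TA TB TC aa an bb bn cc cn (cc 0) hA hB hC hb rfl
  exact ⟨⟨g, hg, hg_connect⟩, hg₀, hg₁⟩

end MorphismAxiom

theorem morphismAxiom_of_octAxiomStar_general {C : Type*} [Category C] [Preadditive C]
    [HasFiniteBiproducts C] {n : ℕ} (F : C ⥤ C)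
    (Θ : Set (Seq n C F))
    (h1c : ExtendFirst Θ) (h4 : OctAxiomStar Θ) :
    MorphismAxiom Θ := by
  rintro ⟨SX, aa, an⟩ ⟨TX, bb, bn⟩ hS hT f₀ f₁ hsq
  obtain ⟨A₀, A₁, TA, rfl⟩ := exists_eq_mk2 SX
  obtain ⟨B₀, B₁, TB, rfl⟩ := exists_eq_mk2 TX
  obtain ⟨TU, uu, un, hu, hU⟩ := h1c (A₀ := A₀) (A₁ := B₁) (aa 0 ≫ f₁)
  obtain ⟨TW, ww, wn, hw, hW⟩ := h1c (A₀ := A₀) (A₁ := B₀) f₀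
  obtain ⟨φ, hφ₀, hφ₁⟩ := h4.exists_hom_to_comp h1c hS hU f₁ hu
  have hdiag : uu 0 = ww 0 ≫ bb 0 := hu.trans (hsq.trans (by rw [hw]; rfl))
  obtain ⟨ψ, hψ₀, hψ₁⟩ := h4.exists_hom_from_comp hW hU hT hdiag
  refine ⟨φ.comp ψ, ?_, ?_⟩
  · rw [Seq.Hom.comp_f, hφ₀, hψ₀, hw]; exact Category.id_comp f₀
  · rw [Seq.Hom.comp_f, hφ₁, hψ₁]; exact Category.comp_id f₁

/-- **Statement 4.** Let `n ≥ 1`, `C` an additive category, `Σ : C → C` an additive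
endofunctor, and `Θ` a class of `(n+2)`-`Σ`-sequences.  If `Θ` satisfies axiom (RN1)(c) and
the octahedral axiom (RN4*), then `Θ` satisfies the morphism axiom (RN3). -/
theorem morphismAxiom_of_octAxiomStar {C : Type*} [Category C] [Preadditive C]
    [HasFiniteBiproducts C] {n : ℕ} (hn : 1 ≤ n) (F : C ⥤ C) [F.Additive]
    (Θ : Set (Seq n C F))
    (h1c : ExtendFirst Θ) (h4 : OctAxiomStar Θ) :
    MorphismAxiom Θ :=
  morphismAxiom_of_octAxiomStar_general F Θ h1c h4

end NAng
end
end

section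
/- Let C be an additive category and X a full subcategory of C closed under isomorphisms, direct sums and direct summands. Let a₀ : A₀ → A₁ and f₁ : A₁ → B₁ be X-monic morphisms, let a₁ : A₁ → A₂ satisfy a₁a₀ = 0, let a₂ : A₂ → A₃ be a weak cokernel of a₁, let b₁ : B₁ → B₂ be a weak cokernel of f₁a₀, and let f₂ : A₂ → B₂ satisfy f₂a₁ = b₁f₁. Then the morphism [a₂; f₂] : A₂ → A₃ ⊕ B₂ (with components a₂ and f₂) is X-monic. -/
open CategoryTheory CategoryTheory.Limits

attribute [local instance] CategoryTheory.Limits.hasBinaryBiproducts_of_finite_biproducts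

namespace NAng

variable {C : Type*} [Category C]

/-- A morphism `f : A ⟶ B` is `𝒳`-monic if every morphism from `A` to an object of `𝒳`
factors through `f`. -/
def XMonic (𝒳 : Set C) {A B : C} (f : A ⟶ B) : Prop :=
  ∀ ⦃X : C⦄, X ∈ 𝒳 → ∀ g : A ⟶ X, ∃ g' : B ⟶ X, f ≫ g' = g

/-- `g : B ⟶ D` is a weak cokernel of `f : A ⟶ B`. -/
def IsWeakCokernel [Limits.HasZeroMorphisms C] {A B D : C} (f : A ⟶ B) (g : B ⟶ D) : Prop :=
  f ≫ g = 0 ∧ ∀ ⦃Y : C⦄ (h : B ⟶ Y), f ≫ h = 0 → ∃ s : D ⟶ Y, g ≫ s = h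

/-- **Statement 8.** Let `C` be an additive category and `𝒳` a full subcategory of `C`
closed under isomorphisms, direct sums and direct summands.  Let `a₀ : A₀ → A₁` and
`f₁ : A₁ → B₁` be `𝒳`-monic morphisms, let `a₁ : A₁ → A₂` satisfy `a₁a₀ = 0`, let
`a₂ : A₂ → A₃` be a weak cokernel of `a₁`, let `b₁ : B₁ → B₂` be a weak cokernel of
`f₁a₀`, and let `f₂ : A₂ → B₂` satisfy `f₂a₁ = b₁f₁`.  Then the morphism
`[a₂; f₂] : A₂ → A₃ ⊕ B₂` is `𝒳`-monic. -/
theorem xMonic_lift {C : Type*} [Category C] [Preadditive C] [HasFiniteBiproducts C]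
    (𝒳 : Set C)
    (hIso : ∀ A B : C, (A ≅ B) → A ∈ 𝒳 → B ∈ 𝒳)
    (hSum : ∀ A B : C, A ∈ 𝒳 → B ∈ 𝒳 → (A ⊞ B) ∈ 𝒳)
    (hSummand : ∀ A B : C, (A ⊞ B) ∈ 𝒳 → A ∈ 𝒳)
    {A₀ A₁ A₂ A₃ B₁ B₂ : C}
    (a₀ : A₀ ⟶ A₁) (a₁ : A₁ ⟶ A₂) (a₂ : A₂ ⟶ A₃)
    (f₁ : A₁ ⟶ B₁) (b₁ : B₁ ⟶ B₂) (f₂ : A₂ ⟶ B₂)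
    (ha₀ : XMonic 𝒳 a₀) (hf₁ : XMonic 𝒳 f₁)
    (ha₁ : a₀ ≫ a₁ = 0)
    (ha₂ : IsWeakCokernel a₁ a₂)
    (hb₁ : IsWeakCokernel (a₀ ≫ f₁) b₁)
    (hsq : a₁ ≫ f₂ = f₁ ≫ b₁) :
    XMonic 𝒳 (biprod.lift a₂ f₂) := by
  intro X hX g
  obtain ⟨h, hh⟩ := hf₁ hX (a₁ ≫ g)
  obtain ⟨s, hs⟩ := hb₁.2 h (by
    rw [Category.assoc, hh, ← Category.assoc, ha₁, zero_comp])
  obtain ⟨t, ht⟩ := ha₂.2 (g - f₂ ≫ s) (by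
    simp only [Preadditive.comp_sub, ← Category.assoc, hsq]
    rw [Category.assoc, hs, hh, sub_self])
  refine ⟨biprod.desc t s, ?_⟩
  simp [ht, hs]

end NAng
end
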